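/- Let μ0, μ1 be distributions on {0,1}^m with supp(μ_b) ⊆ g⁻¹(b) for a partial Boolean function g, and let B be a deterministic decision tree with (B,(μ0,μ1)) full and χ(B,(μ0,μ1)) = min_T χ(T,(μ0,μ1)) (an optimal tree for (μ0,μ1)). Let v be any node of B whose subcube has nonzero probability under both μ0 and μ1, and let μ0' = μ0 | v and μ1' = μ1 | v. Then the subtree B_v of B rooted at v is an optimal decision tree for (μ0', μ1'), i.e., χ(B_v,(μ0',μ1')) = min_T χ(T,(μ0',μ1')). -/

import Mathlib

open Finset

inductive DTree (ι : Type) (S : Type) where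
  | leaf : S → DTree ι S
  | node : ι → DTree ι S → DTree ι S → DTree ι S

namespace DTree

/-- Evaluate a deterministic decision tree on an input. -/
def eval {ι S : Type} : DTree ι S → (ι → Bool) → S
  | leaf s, _ => s
  | node i t0 t1, x => if x i then t1.eval x else t0.eval x

/-- The depth (worst-case number of queries) of a decision tree. -/
def depth {ι S : Type} : DTree ι S → ℕ
  | leaf _ => 0
  | node _ t0 t1 => max t0.depth t1.depth + 1

/-- The number of queries a decision tree makes on a given input. -/
def queries {ι S : Type} : DTree ι S → (ι → Bool) → ℕ
  | leaf _, _ => 0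
  | node i t0 t1, x => (if x i then t1.queries x else t0.queries x) + 1

end DTree

/-- A probability distribution on a finite type, as a nonnegative real weight function summing to 1. -/
def IsDist {γ : Type} [Fintype γ] (μ : γ → ℝ) : Prop :=
  (∀ x, 0 ≤ μ x) ∧ ∑ x, μ x = 1

/-- The support of `μ` is contained in `A`. -/
def SuppIn {γ : Type} [Fintype γ] (μ : γ → ℝ) (A : Set γ) : Prop :=
  ∀ x, μ x ≠ 0 → x ∈ A

/-- `g⁻¹(b)` for a partial Boolean function given as a relation. -/
def preim {m : ℕ} (g : Set ((Fin m → Bool) × Bool)) (b : Bool) : Set (Fin m → Bool) :=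
  {x | (x, b) ∈ g ∧ (x, !b) ∉ g}

/-- `x` is a valid input of the partial Boolean function `g`. -/
def ValidIn {m : ℕ} (g : Set ((Fin m → Bool) × Bool)) (x : Fin m → Bool) : Prop :=
  x ∈ preim g false ∨ x ∈ preim g true

/-- A deterministic decision tree computes the partial Boolean function `g`. -/
def Computes {m : ℕ} (T : DTree (Fin m) Bool) (g : Set ((Fin m → Bool) × Bool)) : Prop :=
  ∀ b : Bool, ∀ x ∈ preim g b, T.eval x = b

/-- The paper's convention for partial Boolean functions: for every invalid input `y`, both
`(y,0)` and `(y,1)` belong to the relation (so that any output is accepted on invalid inputs).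
`totalize g` adds all such pairs; it has the same valid inputs and the same `g⁻¹(b)` as `g`. -/
def totalize {m : ℕ} (g : Set ((Fin m → Bool) × Bool)) : Set ((Fin m → Bool) × Bool) :=
  {p | p ∈ g ∨ ¬ ValidIn g p.1}

/-- Probability that coordinate `j` equals `b` under `μ`. -/
noncomputable def prb {m : ℕ} (μ : (Fin m → Bool) → ℝ) (j : Fin m) (b : Bool) : ℝ :=
  ∑ x, if x j = b then μ x else 0

/-- `μ` conditioned on coordinate `j` being equal to `b` (zero if the event has probability zero). -/
noncomputable def condD {m : ℕ} (μ : (Fin m → Bool) → ℝ) (j : Fin m) (b : Bool) :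
    (Fin m → Bool) → ℝ :=
  fun x => if x j = b then μ x / prb μ j b else 0

/-- `chiW T μ0 μ1 = (Σ_v Δ(v)R(v), Σ_v d_T(v)Δ(v)R(v))`, where at a node `v` querying `j`,
`p_b(v)` is the probability that the queried bit is `0` under `μ_b` conditioned on reaching `v`,
`Δ(v) = |p_0(v) - p_1(v)|`, and `R(v)` is the product along the path to `v` of
`min` of the two conditional transition probabilities; the depth of the root is 1. -/
noncomputable def chiW {m : ℕ} {S : Type} :
    DTree (Fin m) S → ((Fin m → Bool) → ℝ) → ((Fin m → Bool) → ℝ) → ℝ × ℝ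
  | .leaf _, _, _ => (0, 0)
  | .node j t0 t1, μ0, μ1 =>
    let p0 := prb μ0 j false
    let p1 := prb μ1 j false
    let r0 := chiW t0 (condD μ0 j false) (condD μ1 j false)
    let r1 := chiW t1 (condD μ0 j true) (condD μ1 j true)
    (|p0 - p1| + min p0 p1 * r0.1 + min (1 - p0) (1 - p1) * r1.1,
     |p0 - p1| + min p0 p1 * r0.1 + min (1 - p0) (1 - p1) * r1.1
       + min p0 p1 * r0.2 + min (1 - p0) (1 - p1) * r1.2)

/-- The conflict complexity `χ(T,(μ0,μ1)) = Σ_v d_T(v)·Δ(v)·R(v)` of a tree with respect to a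
pair of distributions. -/
noncomputable def chi {m : ℕ} {S : Type} (T : DTree (Fin m) S)
    (μ0 μ1 : (Fin m → Bool) → ℝ) : ℝ :=
  (chiW T μ0 μ1).2

/-- `(T,(μ0,μ1))` is full: `Σ_v Δ(v)·R(v) = 1`. -/
def FullPair {m : ℕ} {S : Type} (T : DTree (Fin m) S)
    (μ0 μ1 : (Fin m → Bool) → ℝ) : Prop :=
  (chiW T μ0 μ1).1 = 1

/-- `p` is a valid path (sequence of query answers) from the root of the tree. -/
def isPath {ι S : Type} : List Bool → DTree ι S → Prop
  | [], _ => True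
  | _ :: _, .leaf _ => False
  | b :: p, .node _ t0 t1 => isPath p (if b then t1 else t0)

/-- The subtree rooted at the node reached by following the path `p`. -/
def subAt {ι S : Type} : List Bool → DTree ι S → DTree ι S
  | [], T => T
  | _ :: _, .leaf s => .leaf s
  | b :: p, .node _ t0 t1 => subAt p (if b then t1 else t0)

/-- The distribution `μ` conditioned on the subcube of inputs following the path `p` in the tree. -/
noncomputable def condAlong {m : ℕ} {S : Type} :
    List Bool → DTree (Fin m) S → ((Fin m → Bool) → ℝ) → ((Fin m → Bool) → ℝ)
  | [], _, μ => μ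
  | _ :: _, .leaf _, μ => μ
  | b :: p, .node j t0 t1, μ => condAlong p (if b then t1 else t0) (condD μ j b)

/-- The probability under `μ` of the subcube of inputs following the path `p` in the tree. -/
noncomputable def reachP {m : ℕ} {S : Type} :
    List Bool → DTree (Fin m) S → ((Fin m → Bool) → ℝ) → ℝ
  | [], _, _ => 1
  | _ :: _, .leaf _, _ => 0
  | b :: p, .node j t0 t1, μ => prb μ j b * reachP p (if b then t1 else t0) (condD μ j b)

/-!
Write `a = min p₀ p₁` and `c = min (1 - p₀) (1 - p₁)` for the transition weights at the root.
Since `|p₀ - p₁| + a + c = 1`, the sum `Σ_v Δ(v)R(v)` is at most `1` for every tree, so a full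
tree has full children (on each side of positive weight) and its `χ` is
`1 + a·χ(left) + c·χ(right)`. Swapping a child for any full tree of the conditioned pair keeps
the tree full, so an optimal tree has optimal children; induct along the path.
-/

section ConflictComplexity

variable {m : ℕ} {S : Type}

/-- Conditioning on a null event gives the zero function, so the recursion leaves the
probability distributions. -/
def IsSubDist (μ : (Fin m → Bool) → ℝ) : Prop :=
  (∀ x, 0 ≤ μ x) ∧ ∑ x, μ x ≤ 1

lemma IsDist.isSubDist {μ : (Fin m → Bool) → ℝ} (h : IsDist μ) : IsSubDist μ :=
  ⟨h.1, h.2.le⟩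

lemma prb_nonneg {μ : (Fin m → Bool) → ℝ} (h : ∀ x, 0 ≤ μ x) (j : Fin m) (b : Bool) :
    0 ≤ prb μ j b :=
  Finset.sum_nonneg fun x _ => by split_ifs <;> simp [h x]

lemma prb_false_add_prb_true (μ : (Fin m → Bool) → ℝ) (j : Fin m) :
    prb μ j false + prb μ j true = ∑ x, μ x := by
  rw [prb, prb, ← Finset.sum_add_distrib]
  exact Finset.sum_congr rfl fun x _ => by cases x j <;> simp

lemma IsSubDist.prb_true_le_one_sub {μ : (Fin m → Bool) → ℝ} (h : IsSubDist μ) (j : Fin m) :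
    prb μ j true ≤ 1 - prb μ j false := by
  linarith [prb_false_add_prb_true μ j, h.2]

lemma IsSubDist.condD {μ : (Fin m → Bool) → ℝ} (h : IsSubDist μ) (j : Fin m) (b : Bool) :
    IsSubDist (condD μ j b) := by
  have hsum : ∑ x, _root_.condD μ j b x = prb μ j b / prb μ j b := by
    nth_rw 1 [prb]
    rw [Finset.sum_div]
    exact Finset.sum_congr rfl fun x _ => by rw [_root_.condD, ite_div, zero_div]
  refine ⟨fun x => ?_, hsum ▸ div_self_le_one _⟩
  unfold _root_.condD
  split_ifs
  exacts [div_nonneg (h.1 x) (prb_nonneg h.1 j b), le_rfl]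

lemma IsSubDist.min_prb_nonneg {μ0 μ1 : (Fin m → Bool) → ℝ} (h0 : IsSubDist μ0)
    (h1 : IsSubDist μ1) (j : Fin m) :
    0 ≤ min (prb μ0 j false) (prb μ1 j false) :=
  le_min (prb_nonneg h0.1 j false) (prb_nonneg h1.1 j false)

lemma IsSubDist.min_one_sub_prb_nonneg {μ0 μ1 : (Fin m → Bool) → ℝ} (h0 : IsSubDist μ0)
    (h1 : IsSubDist μ1) (j : Fin m) :
    0 ≤ min (1 - prb μ0 j false) (1 - prb μ1 j false) :=
  le_min ((prb_nonneg h0.1 j true).trans (h0.prb_true_le_one_sub j))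
    ((prb_nonneg h1.1 j true).trans (h1.prb_true_le_one_sub j))

lemma abs_sub_add_min_add_min_one_sub (p q : ℝ) :
    |p - q| + min p q + min (1 - p) (1 - q) = 1 := by
  rcases le_total p q with h | h
  · rw [abs_of_nonpos (by linarith), min_eq_left h, min_eq_right (by linarith)]; ring
  · rw [abs_of_nonneg (by linarith), min_eq_right h, min_eq_left (by linarith)]; ring

lemma chi_node (j : Fin m) (t0 t1 : DTree (Fin m) S) (μ0 μ1 : (Fin m → Bool) → ℝ) :
    chi (.node j t0 t1) μ0 μ1 = (chiW (.node j t0 t1) μ0 μ1).1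
      + min (prb μ0 j false) (prb μ1 j false) * chi t0 (condD μ0 j false) (condD μ1 j false)
      + min (1 - prb μ0 j false) (1 - prb μ1 j false)
        * chi t1 (condD μ0 j true) (condD μ1 j true) :=
  rfl

lemma chiW_fst_mem_Icc (T : DTree (Fin m) S) {μ0 μ1 : (Fin m → Bool) → ℝ}
    (h0 : IsSubDist μ0) (h1 : IsSubDist μ1) : (chiW T μ0 μ1).1 ∈ Set.Icc 0 1 := by
  induction T generalizing μ0 μ1 with
  | leaf => simp [chiW]
  | node j t0 t1 ih0 ih1 =>
    obtain ⟨hl0, hl1⟩ := ih0 (h0.condD j false) (h1.condD j false)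
    obtain ⟨hr0, hr1⟩ := ih1 (h0.condD j true) (h1.condD j true)
    have ha := h0.min_prb_nonneg h1 j
    have hc := h0.min_one_sub_prb_nonneg h1 j
    have hid := abs_sub_add_min_add_min_one_sub (prb μ0 j false) (prb μ1 j false)
    simp only [chiW]
    constructor
    · positivity
    · linarith [mul_le_of_le_one_right ha hl1, mul_le_of_le_one_right hc hr1]

lemma chi_nonneg (T : DTree (Fin m) S) {μ0 μ1 : (Fin m → Bool) → ℝ}
    (h0 : IsSubDist μ0) (h1 : IsSubDist μ1) : 0 ≤ chi T μ0 μ1 := by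
  induction T generalizing μ0 μ1 with
  | leaf => simp [chi, chiW]
  | node j t0 t1 ih0 ih1 =>
    rw [chi_node]
    have := (chiW_fst_mem_Icc (.node j t0 t1) h0 h1).1
    have := mul_nonneg (h0.min_prb_nonneg h1 j) (ih0 (h0.condD j false) (h1.condD j false))
    have := mul_nonneg (h0.min_one_sub_prb_nonneg h1 j) (ih1 (h0.condD j true) (h1.condD j true))
    linarith

lemma fullPair_node_iff {j : Fin m} {t0 t1 : DTree (Fin m) S} {μ0 μ1 : (Fin m → Bool) → ℝ}
    (h0 : IsSubDist μ0) (h1 : IsSubDist μ1) :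
    FullPair (.node j t0 t1) μ0 μ1 ↔
      min (prb μ0 j false) (prb μ1 j false) * (chiW t0 (condD μ0 j false) (condD μ1 j false)).1
          = min (prb μ0 j false) (prb μ1 j false) ∧
        min (1 - prb μ0 j false) (1 - prb μ1 j false)
            * (chiW t1 (condD μ0 j true) (condD μ1 j true)).1
          = min (1 - prb μ0 j false) (1 - prb μ1 j false) := by
  have hid := abs_sub_add_min_add_min_one_sub (prb μ0 j false) (prb μ1 j false)
  unfold FullPair
  simp only [chiW]
  constructor
  · intro hfull
    have hl := mul_le_of_le_one_right (h0.min_prb_nonneg h1 j)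
      (chiW_fst_mem_Icc t0 (h0.condD j false) (h1.condD j false)).2
    have hr := mul_le_of_le_one_right (h0.min_one_sub_prb_nonneg h1 j)
      (chiW_fst_mem_Icc t1 (h0.condD j true) (h1.condD j true)).2
    constructor <;> linarith
  · rintro ⟨hl, hr⟩
    linarith

lemma chi_node_of_fullPair {j : Fin m} {t0 t1 : DTree (Fin m) S}
    {μ0 μ1 : (Fin m → Bool) → ℝ} (hfull : FullPair (.node j t0 t1) μ0 μ1) :
    chi (.node j t0 t1) μ0 μ1 =
      1 + min (prb μ0 j false) (prb μ1 j false) * chi t0 (condD μ0 j false) (condD μ1 j false)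
        + min (1 - prb μ0 j false) (1 - prb μ1 j false)
          * chi t1 (condD μ0 j true) (condD μ1 j true) := by
  rw [chi_node, hfull]

def IsOptimal (T : DTree (Fin m) S) (μ0 μ1 : (Fin m → Bool) → ℝ) : Prop :=
  FullPair T μ0 μ1 ∧ ∀ T' : DTree (Fin m) S, FullPair T' μ0 μ1 → chi T μ0 μ1 ≤ chi T' μ0 μ1

lemma IsOptimal.chi_eq_sInf {T : DTree (Fin m) S} {μ0 μ1 : (Fin m → Bool) → ℝ}
    (hT : IsOptimal T μ0 μ1) :
    chi T μ0 μ1 = sInf {x : ℝ | ∃ T' : DTree (Fin m) S, FullPair T' μ0 μ1 ∧ x = chi T' μ0 μ1} := by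
  symm
  exact IsLeast.csInf_eq ⟨⟨T, hT.1, rfl⟩, by rintro _ ⟨T', hT', rfl⟩; exact hT.2 T' hT'⟩

lemma isOptimal_of_chi_eq_sInf {T : DTree (Fin m) S} {μ0 μ1 : (Fin m → Bool) → ℝ}
    (h0 : IsSubDist μ0) (h1 : IsSubDist μ1) (hfull : FullPair T μ0 μ1)
    (hT : chi T μ0 μ1 =
      sInf {x : ℝ | ∃ T' : DTree (Fin m) S, FullPair T' μ0 μ1 ∧ x = chi T' μ0 μ1}) :
    IsOptimal T μ0 μ1 := by
  have hbdd : BddBelow {x : ℝ | ∃ T' : DTree (Fin m) S, FullPair T' μ0 μ1 ∧ x = chi T' μ0 μ1} :=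
    ⟨0, by rintro _ ⟨T', -, rfl⟩; exact chi_nonneg T' h0 h1⟩
  exact ⟨hfull, fun T' hT' => hT ▸ csInf_le hbdd ⟨T', hT', rfl⟩⟩

lemma IsOptimal.child {j : Fin m} {t0 t1 : DTree (Fin m) S} {μ0 μ1 : (Fin m → Bool) → ℝ}
    (h0 : IsSubDist μ0) (h1 : IsSubDist μ1) (hB : IsOptimal (.node j t0 t1) μ0 μ1) {b : Bool}
    (hb0 : prb μ0 j b ≠ 0) (hb1 : prb μ1 j b ≠ 0) :
    IsOptimal (if b then t1 else t0) (condD μ0 j b) (condD μ1 j b) := by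
  obtain ⟨hfull, hmin⟩ := hB
  obtain ⟨hl, hr⟩ := (fullPair_node_iff h0 h1).1 hfull
  have hpos0 := (prb_nonneg h0.1 j b).lt_of_ne' hb0
  have hpos1 := (prb_nonneg h1.1 j b).lt_of_ne' hb1
  cases b with
  | false =>
    simp only [Bool.false_eq_true, ↓reduceIte]
    have ha : 0 < min (prb μ0 j false) (prb μ1 j false) := lt_min hpos0 hpos1
    refine ⟨(mul_eq_left₀ ha.ne').1 hl, fun T hT => ?_⟩
    have hT' : FullPair (.node j T t1) μ0 μ1 :=
      (fullPair_node_iff h0 h1).2 ⟨by rw [hT, mul_one], hr⟩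
    have hle := hmin _ hT'
    rw [chi_node_of_fullPair hfull, chi_node_of_fullPair hT'] at hle
    exact le_of_mul_le_mul_left (by linarith) ha
  | true =>
    simp only [↓reduceIte]
    have hc : 0 < min (1 - prb μ0 j false) (1 - prb μ1 j false) :=
      lt_min (hpos0.trans_le (h0.prb_true_le_one_sub j))
        (hpos1.trans_le (h1.prb_true_le_one_sub j))
    refine ⟨(mul_eq_left₀ hc.ne').1 hr, fun T hT => ?_⟩
    have hT' : FullPair (.node j t0 T) μ0 μ1 :=
      (fullPair_node_iff h0 h1).2 ⟨hl, by rw [hT, mul_one]⟩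
    have hle := hmin _ hT'
    rw [chi_node_of_fullPair hfull, chi_node_of_fullPair hT'] at hle
    exact le_of_mul_le_mul_left (by linarith) hc

lemma IsOptimal.subAt {p : List Bool} {B : DTree (Fin m) S} {μ0 μ1 : (Fin m → Bool) → ℝ}
    (h0 : IsSubDist μ0) (h1 : IsSubDist μ1) (hB : IsOptimal B μ0 μ1) (hp : isPath p B)
    (hr0 : reachP p B μ0 ≠ 0) (hr1 : reachP p B μ1 ≠ 0) :
    IsOptimal (subAt p B) (condAlong p B μ0) (condAlong p B μ1) := by
  induction p generalizing B μ0 μ1 with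
  | nil => exact hB
  | cons b p ih =>
    cases B with
    | leaf => exact hp.elim
    | node j t0 t1 =>
      obtain ⟨hb0, hr0⟩ := mul_ne_zero_iff.1 hr0
      obtain ⟨hb1, hr1⟩ := mul_ne_zero_iff.1 hr1
      exact ih (h0.condD j b) (h1.condD j b) (hB.child h0 h1 hb0 hb1) hp hr0 hr1

end ConflictComplexity

theorem subtree_optimal_general (m : ℕ)
    (μ0 μ1 : (Fin m → Bool) → ℝ)
    (hμ0 : IsDist μ0) (hμ1 : IsDist μ1)
    (B : DTree (Fin m) Bool)
    (hfull : FullPair B μ0 μ1)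
    (hopt : chi B μ0 μ1 =
      sInf { x : ℝ | ∃ T : DTree (Fin m) Bool, FullPair T μ0 μ1 ∧ x = chi T μ0 μ1 })
    (p : List Bool) (hp : isPath p B)
    (h0 : reachP p B μ0 ≠ 0) (h1 : reachP p B μ1 ≠ 0) :
    FullPair (subAt p B) (condAlong p B μ0) (condAlong p B μ1) ∧
    chi (subAt p B) (condAlong p B μ0) (condAlong p B μ1) =
      sInf { x : ℝ | ∃ T : DTree (Fin m) Bool,
        FullPair T (condAlong p B μ0) (condAlong p B μ1) ∧
        x = chi T (condAlong p B μ0) (condAlong p B μ1) } := by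
  have hB := isOptimal_of_chi_eq_sInf hμ0.isSubDist hμ1.isSubDist hfull hopt
  have hv := hB.subAt hμ0.isSubDist hμ1.isSubDist hp h0 h1
  exact ⟨hv.1, hv.chi_eq_sInf⟩

/-- Let `B` be an optimal tree for `(μ0,μ1)` (i.e. `(B,(μ0,μ1))` is full and
`χ(B,(μ0,μ1))` is minimal among full trees), where `supp(μ_b) ⊆ g⁻¹(b)`. If the subcube of a
node `v` of `B` (reached by the path `p`) has nonzero probability under both `μ0` and `μ1`,
then the subtree of `B` rooted at `v` is an optimal tree for `(μ0|v, μ1|v)`. -/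
theorem subtree_optimal (m : ℕ) (g : Set ((Fin m → Bool) × Bool))
    (μ0 μ1 : (Fin m → Bool) → ℝ)
    (hμ0 : IsDist μ0) (hμ1 : IsDist μ1)
    (hs0 : SuppIn μ0 (preim g false)) (hs1 : SuppIn μ1 (preim g true))
    (B : DTree (Fin m) Bool)
    (hfull : FullPair B μ0 μ1)
    (hopt : chi B μ0 μ1 =
      sInf { x : ℝ | ∃ T : DTree (Fin m) Bool, FullPair T μ0 μ1 ∧ x = chi T μ0 μ1 })
    (p : List Bool) (hp : isPath p B)
    (h0 : reachP p B μ0 ≠ 0) (h1 : reachP p B μ1 ≠ 0) :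
    FullPair (subAt p B) (condAlong p B μ0) (condAlong p B μ1) ∧
    chi (subAt p B) (condAlong p B μ0) (condAlong p B μ1) =
      sInf { x : ℝ | ∃ T : DTree (Fin m) Bool,
        FullPair T (condAlong p B μ0) (condAlong p B μ1) ∧
        x = chi T (condAlong p B μ0) (condAlong p B μ1) } :=
  subtree_optimal_general m μ0 μ1 hμ0 hμ1 B hfull hopt p hp h0 h1
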